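/- With F_λ(α, θ) = b^{−λ} Σ_{0 ≤ n < b^λ} e(α R_λ(n) − θ n), for any integers 0 ≤ λ' ≤ λ and reals α, θ one has the splitting |F_λ(α, θ)| = |F_{λ'}(α b^{λ−λ'}, θ)| · |F_{λ−λ'}(α, θ b^{λ'})|. -/

import Mathlib

/-! Writing `n = m + b ^ λ' * k` with `m < b ^ λ'` and `k < b ^ (λ - λ')`, the low digits of `n`
are those of `m` and the high ones those of `k`, so `R_λ(n) = R_λ'(m) b ^ (λ - λ') + R_{λ-λ'}(k)`.
The summand of `F_λ` then factors as a function of `m` times a function of `k`, and the double sum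
is the product `F_λ'(α b ^ (λ - λ'), θ) F_{λ-λ'}(α, θ b ^ λ')` exactly, before taking absolute values. -/

/-- The `j`-th digit of `n` in base `b`. -/
def digit (b n j : ℕ) : ℕ := n / b ^ j % b

/-- The reverse of the `L` first digits of `n` in base `b`. -/
def rev (b L n : ℕ) : ℕ := ∑ j ∈ Finset.range L, digit b n j * b ^ (L - 1 - j)

/-- The exponential sum `F_λ(α,θ) = b^{-λ} ∑_{0 ≤ n < b^λ} e(α R_λ(n) - θ n)`. -/
noncomputable def Fl (b L : ℕ) (α θ : ℝ) : ℂ :=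
  (1 / (b : ℂ) ^ L) * ∑ n ∈ Finset.range (b ^ L),
    Complex.exp (2 * Real.pi * Complex.I * ((α * (rev b L n : ℝ) - θ * n : ℝ) : ℂ))

open Finset

theorem Finset.sum_range_mul_eq_sum_sum {M : Type*} [AddCommMonoid M] (f : ℕ → M) (a c : ℕ) :
    ∑ n ∈ range (a * c), f n = ∑ m ∈ range a, ∑ k ∈ range c, f (m + a * k) := by
  induction c with
  | zero => simp
  | succ c ih =>
    rw [Nat.mul_succ, sum_range_add, ih, ← sum_add_distrib]
    exact sum_congr rfl fun m _ ↦ by rw [sum_range_succ, add_comm (a * c)]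

section Reversal

variable {b : ℕ}

lemma digit_add_pow_mul_of_lt (hb : 0 < b) (m k : ℕ) {L' j : ℕ} (hj : j < L') :
    digit b (m + b ^ L' * k) j = digit b m j := by
  have h : b ^ L' * k = b ^ j * (b * (b ^ (L' - j - 1) * k)) := by
    rw [← mul_assoc, ← mul_assoc, ← pow_succ, ← pow_add]
    congr 2
    omega
  rw [digit, h, Nat.add_mul_div_left _ _ (pow_pos hb j), Nat.add_mul_mod_self_left, digit]

lemma digit_add_pow_mul_add (hb : 0 < b) {m L' : ℕ} (hm : m < b ^ L') (k i : ℕ) :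
    digit b (m + b ^ L' * k) (L' + i) = digit b k i := by
  rw [digit, pow_add, ← Nat.div_div_eq_div_mul, Nat.add_mul_div_left _ _ (pow_pos hb L'),
    Nat.div_eq_of_lt hm, zero_add, digit]

lemma rev_add_pow_mul (hb : 0 < b) {m L' : ℕ} (hm : m < b ^ L') (k D : ℕ) :
    rev b (L' + D) (m + b ^ L' * k) = rev b L' m * b ^ D + rev b D k := by
  rw [rev, sum_range_add, rev, sum_mul, rev]
  congr 1 <;> refine sum_congr rfl fun j hj ↦ ?_ <;> rw [mem_range] at hj
  · rw [digit_add_pow_mul_of_lt hb m k hj, mul_assoc, ← pow_add]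
    congr 2
    omega
  · rw [digit_add_pow_mul_add hb hm]
    congr 2
    omega

lemma Fl_add (hb : 0 < b) (L' D : ℕ) (α θ : ℝ) :
    Fl b (L' + D) α θ = Fl b L' (α * (b : ℝ) ^ D) θ * Fl b D α (θ * (b : ℝ) ^ L') := by
  have hterm : ∀ m < b ^ L', ∀ k,
      Complex.exp (2 * Real.pi * Complex.I *
        ((α * (rev b (L' + D) (m + b ^ L' * k) : ℝ) - θ * ((m + b ^ L' * k : ℕ) : ℝ) : ℝ) : ℂ)) =
      Complex.exp (2 * Real.pi * Complex.I * ((α * (b : ℝ) ^ D * (rev b L' m : ℝ) - θ * m : ℝ) : ℂ)) *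
      Complex.exp (2 * Real.pi * Complex.I * ((α * (rev b D k : ℝ) - θ * (b : ℝ) ^ L' * k : ℝ) : ℂ)) := by
    intro m hm k
    rw [← Complex.exp_add, rev_add_pow_mul hb hm]
    push_cast
    ring_nf
  simp only [Fl, pow_add, sum_range_mul_eq_sum_sum]
  rw [mul_mul_mul_comm, sum_mul_sum, one_div_mul_one_div]
  exact congrArg _ (sum_congr rfl fun m hm ↦ sum_congr rfl fun k _ ↦ hterm m (mem_range.1 hm) k)

end Reversal

theorem stmt13 (b L L' : ℕ) (hb : 2 ≤ b) (hL : L' ≤ L) (α θ : ℝ) :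
    ‖Fl b L α θ‖ =
      ‖Fl b L' (α * (b : ℝ) ^ (L - L')) θ‖ *
        ‖Fl b (L - L') α (θ * (b : ℝ) ^ L')‖ := by
  obtain ⟨D, rfl⟩ := Nat.exists_eq_add_of_le hL
  rw [Nat.add_sub_cancel_left, Fl_add (by omega), norm_mul]
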